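/- Let U ⊂ ℝ² be open bounded with Lipschitz boundary, g ∈ W^{1,∞}(U), ξ ∈ U, and for ρ ≥ 0 set U_ρ = U \ B_ρ(ξ). Let R_ρ be the harmonic function on U_ρ with R_ρ − g ∈ H¹₀(U_ρ). Then R_ρ converges to R₀ locally uniformly on U \ {ξ} as ρ → 0. -/

import Mathlib

noncomputable section

abbrev Pt := EuclideanSpace ℝ (Fin 2)

/-- `f` is harmonic on `s`: it is `C²` on `s` and its Laplacian vanishes on `s`. -/
def HarmOn (f : Pt → ℝ) (s : Set Pt) : Prop :=
  ContDiffOn ℝ 2 f s ∧ ∀ x ∈ s,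
    (∑ i : Fin 2, iteratedFDeriv ℝ 2 f x
      ![EuclideanSpace.single i (1 : ℝ), EuclideanSpace.single i (1 : ℝ)]) = 0

/-!
The difference `R ρ - R 0` is harmonic on `U \ B̄_ρ(ξ)`, vanishes on `∂U`, and is bounded by
`M = sup |g - R 0|` on the circle `∂B_ρ(ξ)`. Since `log ‖x - ξ‖` is harmonic in the plane,
the barrier `M (log d - log ‖x - ξ‖) / (log d - log ρ)`, with `d` bounding `‖x - ξ‖` on `U`, is
harmonic, nonnegative on `∂U` and equal to `M` on the circle. The maximum principle therefore gives
`|R ρ x - R 0 x| ≤ M (log d - log ‖x - ξ‖) / (log d - log ρ)`, which tends to `0` uniformly on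
`{‖x - ξ‖ ≥ δ}` as `ρ → 0`, because `log ρ → -∞`.

The weak maximum principle is the classical perturbation argument: `f + δ ‖x‖²` has positive
Laplacian, so it cannot attain its maximum at an interior point, where every second directional
derivative is nonpositive.
-/

open Filter Set Metric Topology InnerProductSpace Laplacian Module Bornology

theorem IsLocalMax.deriv_deriv_nonpos {φ : ℝ → ℝ} {a : ℝ} (hmax : IsLocalMax φ a)
    (hc : ContinuousAt φ a) : deriv (deriv φ) a ≤ 0 := by
  by_contra! hpos
  have hmin : IsLocalMin φ a := isLocalMin_of_deriv_deriv_pos hpos hmax.deriv_eq_zero hc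
  have hconst : φ =ᶠ[𝓝 a] fun _ => φ a :=
    (hmax.and hmin).mono fun x hx => le_antisymm hx.1 hx.2
  have hzero : deriv (deriv φ) a = 0 := by simpa using hconst.deriv.deriv_eq
  exact hpos.ne' hzero

theorem IsLocalMax.iteratedFDeriv_two_nonpos {E : Type*} [NormedAddCommGroup E]
    [NormedSpace ℝ E] {f : E → ℝ} {x : E} (hmax : IsLocalMax f x) (hf : ContDiffAt ℝ 2 f x)
    (v : E) : iteratedFDeriv ℝ 2 f x ![v, v] ≤ 0 := by
  set ℓ : ℝ → E := fun t => x + t • v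
  have hℓ (t : ℝ) : HasDerivAt ℓ v t :=
    (((hasDerivAt_id t).smul_const v).const_add x).congr_deriv (one_smul ℝ v)
  have hℓ0 : ℓ 0 = x := by simp [ℓ]
  have hderiv : deriv (f ∘ ℓ) =ᶠ[𝓝 0] fun t => fderiv ℝ f (ℓ t) v := by
    have hℓ_tendsto : Tendsto ℓ (𝓝 0) (𝓝 (ℓ 0)) := (hℓ 0).continuousAt
    filter_upwards [hℓ_tendsto.eventually (hℓ0 ▸ hf.eventually (by simp))] with t ht
    exact ((ht.differentiableAt (by simp)).hasFDerivAt.comp_hasDerivAt t (hℓ t)).deriv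
  have hsecond : deriv (deriv (f ∘ ℓ)) 0 = iteratedFDeriv ℝ 2 f x ![v, v] := by
    have hfd : DifferentiableAt ℝ (fderiv ℝ f) (ℓ 0) :=
      hℓ0 ▸ (hf.fderiv_right (m := 1) le_rfl).differentiableAt (by simp)
    rw [hderiv.deriv_eq, iteratedFDeriv_two_apply]
    simpa [Function.comp_def, hℓ0] using
      ((ContinuousLinearMap.apply ℝ ℝ v).hasFDerivAt.comp_hasDerivAt 0
        (hfd.hasFDerivAt.comp_hasDerivAt 0 (hℓ 0))).deriv
  rw [← hsecond]
  exact ((hℓ0 ▸ hmax).comp_continuous (hℓ 0).continuousAt).deriv_deriv_nonpos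
    ((hℓ0 ▸ hf.continuousAt).comp (hℓ 0).continuousAt)

section Geometry

variable {E : Type*} [NormedAddCommGroup E]

theorem closure_diff_closedBall_subset (U : Set E) (ξ : E) (ρ : ℝ) :
    closure (U \ closedBall ξ ρ) ⊆ closure U ∩ {x | ρ ≤ ‖x - ξ‖} := by
  refine subset_inter (closure_mono sdiff_subset) (closure_minimal ?_ ?_)
  · intro x hx
    simpa [dist_eq_norm] using (not_le.1 (mem_closedBall.not.1 hx.2)).le
  · exact isClosed_le continuous_const (continuous_id.sub continuous_const).norm

theorem frontier_diff_closedBall_subset (U : Set E) (ξ : E) (ρ : ℝ) :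
    frontier (U \ closedBall ξ ρ) ⊆ frontier U ∪ sphere ξ ρ := by
  rw [sdiff_eq]
  refine (frontier_inter_subset _ _).trans (union_subset_union ?_ ?_)
  · exact inter_subset_left
  · exact inter_subset_right.trans
      (frontier_compl (closedBall ξ ρ) ▸ frontier_closedBall_subset_sphere)

theorem tendstoLocallyUniformlyOn_of_abs_sub_le_log {U : Set E} {ξ : E} {ρ₀ d M : ℝ}
    (hρ₀ : 0 < ρ₀) (hM : 0 ≤ M) {R : ℝ → E → ℝ}
    (hbound : ∀ ρ ∈ Ioo 0 ρ₀, ∀ x ∈ U \ closedBall ξ ρ,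
      |R ρ x - R 0 x| ≤ M * (Real.log d - Real.log ‖x - ξ‖) / (Real.log d - Real.log ρ)) :
    TendstoLocallyUniformlyOn R (R 0) (𝓝[>] 0) (U \ {ξ}) := by
  rw [Metric.tendstoLocallyUniformlyOn_iff]
  intro ε hε x hx
  set δ := ‖x - ξ‖ / 2
  have hxξ : 0 < ‖x - ξ‖ := norm_pos_iff.2 (sub_ne_zero.2 hx.2)
  have hnhds : {y | δ < ‖y - ξ‖} ∈ 𝓝 x :=
    (isOpen_lt continuous_const (by fun_prop)).mem_nhds (half_lt_self hxξ)
  refine ⟨_, inter_mem self_mem_nhdsWithin (mem_nhdsWithin_of_mem_nhds hnhds), ?_⟩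
  have hden : Tendsto (fun ρ => Real.log d - Real.log ρ) (𝓝[>] 0) atTop :=
    tendsto_atTop_add_const_left _ _ (tendsto_neg_atBot_atTop.comp Real.tendsto_log_nhdsGT_zero)
  have hsmall :
      ∀ᶠ ρ in 𝓝[>] 0, M * (Real.log d - Real.log δ) / (Real.log d - Real.log ρ) < ε :=
    (tendsto_const_nhds.div_atTop hden).eventually_lt_const hε
  filter_upwards [hsmall, hden.eventually_gt_atTop 0,
    Ioo_mem_nhdsGT (lt_min (half_pos hxξ) hρ₀)] with ρ hρε hρden hρ y ⟨hyU, hyδ⟩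
  have hρy : ρ < ‖y - ξ‖ := (hρ.2.trans_le (min_le_left _ _)).trans hyδ
  have hyρ : y ∈ U \ closedBall ξ ρ := ⟨hyU.1, by simpa [dist_eq_norm] using hρy⟩
  rw [Real.dist_eq, abs_sub_comm]
  calc |R ρ y - R 0 y|
      ≤ M * (Real.log d - Real.log ‖y - ξ‖) / (Real.log d - Real.log ρ) :=
        hbound ρ ⟨hρ.1, hρ.2.trans_le (min_le_right _ _)⟩ y hyρ
    _ ≤ M * (Real.log d - Real.log δ) / (Real.log d - Real.log ρ) := by
        gcongr
        exact hyδ.le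
    _ < ε := hρε

end Geometry

section Harmonic

variable {E : Type*} [NormedAddCommGroup E] [InnerProductSpace ℝ E] [FiniteDimensional ℝ E]
  {F : Type*} [NormedAddCommGroup F] [InnerProductSpace ℝ F] [FiniteDimensional ℝ F]
  {G : Type*} [NormedAddCommGroup G] [NormedSpace ℝ G]

theorem IsLocalMax.laplacian_nonpos {f : E → ℝ} {x : E} (hmax : IsLocalMax f x)
    (hf : ContDiffAt ℝ 2 f x) : Δ f x ≤ 0 := by
  rw [laplacian_eq_iteratedFDeriv_stdOrthonormalBasis]
  exact Finset.sum_nonpos fun i _ => hmax.iteratedFDeriv_two_nonpos hf _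

theorem laplacian_norm_sq (x : E) : Δ (fun y : E => ‖y‖ ^ 2) x = 2 * finrank ℝ E := by
  have h : fderiv ℝ (fun y : E => ‖y‖ ^ 2) = ⇑((2 : ℝ) • innerSL ℝ (E := E)) := by
    rw [fderiv_norm_sq]; ext; simp
  have h2 (v : E) :
      iteratedFDeriv ℝ 2 (fun y : E => ‖y‖ ^ 2) x ![v, v] = 2 * ‖v‖ ^ 2 := by
    rw [iteratedFDeriv_two_apply, h, ContinuousLinearMap.fderiv]
    simp only [FunLike.coe_smul, Pi.smul_apply, smul_eq_mul, Matrix.cons_val_zero,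
      Matrix.cons_val_one]
    rw [innerSL_apply_apply, real_inner_self_eq_norm_sq]
  simp [laplacian_eq_iteratedFDeriv_stdOrthonormalBasis, h2, mul_comm]

theorem exists_mem_frontier_isMaxOn_closure_of_laplacian_pos {V : Set E} (hVo : IsOpen V)
    (hVb : IsBounded V) (hne : V.Nonempty) {f : E → ℝ} (hf : ContDiffOn ℝ 2 f V)
    (hc : ContinuousOn f (closure V)) (hΔ : ∀ x ∈ V, 0 < Δ f x) :
    ∃ z ∈ frontier V, IsMaxOn f (closure V) z := by
  obtain ⟨z, hz, hmax⟩ := hVb.isCompact_closure.exists_isMaxOn (hne.mono subset_closure) hc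
  refine ⟨z, hVo.frontier_eq ▸ ⟨hz, fun hzV => ?_⟩, hmax⟩
  have hloc : IsLocalMax f z :=
    hmax.isLocalMax (mem_of_superset (hVo.mem_nhds hzV) subset_closure)
  exact (hΔ z hzV).not_ge (hloc.laplacian_nonpos (hf.contDiffAt (hVo.mem_nhds hzV)))

theorem le_of_forall_mem_frontier_le_of_laplacian_nonneg [Nontrivial E] {V : Set E}
    (hVo : IsOpen V) (hVb : IsBounded V) {f : E → ℝ} (hf : ContDiffOn ℝ 2 f V)
    (hc : ContinuousOn f (closure V)) (hΔ : ∀ x ∈ V, 0 ≤ Δ f x) {c : ℝ}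
    (hbd : ∀ x ∈ frontier V, f x ≤ c) {x : E} (hx : x ∈ closure V) : f x ≤ c := by
  obtain ⟨r, hr⟩ := hVb.closure.subset_closedBall 0
  have hperturbed (δ : ℝ) (hδ : 0 < δ) : f x ≤ c + δ * r ^ 2 := by
    set g := f + δ • fun y : E => ‖y‖ ^ 2
    have hΔg (y : E) (hy : y ∈ V) : 0 < Δ g y := by
      have hfy := hf.contDiffAt (hVo.mem_nhds hy)
      have hsq : ContDiffAt ℝ 2 (fun y : E => ‖y‖ ^ 2) y := (contDiff_norm_sq ℝ).contDiffAt
      have hδsq : ContDiffAt ℝ 2 (δ • fun y : E => ‖y‖ ^ 2) y := hsq.const_smul δ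
      rw [hfy.laplacian_add hδsq, laplacian_smul δ hsq, laplacian_norm_sq]
      have hΔy := hΔ y hy
      have hdim : (0 : ℝ) < finrank ℝ E := mod_cast finrank_pos
      simp only [smul_eq_mul]
      positivity
    obtain ⟨z, hz, hmax⟩ := exists_mem_frontier_isMaxOn_closure_of_laplacian_pos hVo hVb
      (closure_nonempty_iff.1 ⟨x, hx⟩)
      (hf.add (contDiffOn_const.smul (contDiff_norm_sq ℝ).contDiffOn))
      (hc.add (continuousOn_const.smul (continuous_norm.pow 2).continuousOn)) hΔg
    have hzr : ‖z‖ ≤ r := by simpa using hr (frontier_subset_closure hz)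
    calc f x ≤ g x := by simp [g]; positivity
      _ ≤ g z := hmax hx
      _ ≤ c + δ * r ^ 2 := by
        simp only [g, Pi.add_apply, Pi.smul_apply, smul_eq_mul]
        gcongr
        exact hbd z hz
  have hlim : Tendsto (fun δ : ℝ => c + δ * r ^ 2) (𝓝[>] 0) (𝓝 c) := by
    have hcont : Continuous fun δ : ℝ => c + δ * r ^ 2 := by fun_prop
    simpa using (hcont.tendsto 0).mono_left nhdsWithin_le_nhds
  exact ge_of_tendsto hlim (eventually_nhdsWithin_of_forall hperturbed)

theorem InnerProductSpace.HarmonicOnNhd.abs_le_of_forall_mem_frontier_abs_le [Nontrivial E]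
    {V : Set E} (hVo : IsOpen V) (hVb : IsBounded V) {u h : E → ℝ} (hu : HarmonicOnNhd u V)
    (hh : HarmonicOnNhd h V) (huc : ContinuousOn u (closure V)) (hhc : ContinuousOn h (closure V))
    (hbd : ∀ x ∈ frontier V, |u x| ≤ h x) {x : E} (hx : x ∈ closure V) : |u x| ≤ h x := by
  have hle {w : E → ℝ} (hw : HarmonicOnNhd w V) (hwc : ContinuousOn w (closure V))
      (hwbd : ∀ x ∈ frontier V, w x ≤ h x) : w x ≤ h x := by
    have hdiff := le_of_forall_mem_frontier_le_of_laplacian_nonneg hVo hVb (hw.sub hh).contDiffOn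
      (hwc.sub hhc) (fun y hy => ((hw.sub hh) y hy).2.self_of_nhds.ge) (c := 0)
      (fun y hy => sub_nonpos.2 (hwbd y hy)) hx
    simpa [sub_nonpos] using hdiff
  refine abs_le.2 ⟨?_, hle hu huc fun y hy => (abs_le.1 (hbd y hy)).2⟩
  have hneg := hle hu.neg huc.neg fun y hy => by
    rw [Pi.neg_apply]; linarith [(abs_le.1 (hbd y hy)).1]
  rw [Pi.neg_apply] at hneg
  linarith

theorem InnerProductSpace.laplacian_comp_linearIsometryEquiv (f : F → G) (L : E ≃ₗᵢ[ℝ] F)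
    (x : E) : Δ (f ∘ L) x = Δ f (L x) := by
  have hcomp := L.toContinuousLinearEquiv.iteratedFDerivWithin_comp_right f uniqueDiffOn_univ
    (mem_univ (L x)) 2
  simp only [preimage_univ, iteratedFDerivWithin_univ] at hcomp
  let b := stdOrthonormalBasis ℝ E
  rw [laplacian_eq_iteratedFDeriv_orthonormalBasis _ b,
    laplacian_eq_iteratedFDeriv_orthonormalBasis _ (b.map L)]
  refine Finset.sum_congr rfl fun i _ => ?_
  rw [show (f ∘ L : E → G) = f ∘ L.toContinuousLinearEquiv from rfl, hcomp,
    ContinuousMultilinearMap.compContinuousLinearMap_apply]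
  congr 1
  ext j
  fin_cases j <;> simp

theorem InnerProductSpace.HarmonicAt.comp_linearIsometryEquiv {f : F → G} (L : E ≃ₗᵢ[ℝ] F)
    {x : E} (hf : HarmonicAt f (L x)) : HarmonicAt (f ∘ L) x := by
  refine ⟨hf.1.comp x L.contDiff.contDiffAt, ?_⟩
  filter_upwards [(L.continuous.tendsto x).eventually hf.2] with y hy
  rw [laplacian_comp_linearIsometryEquiv, hy, Pi.zero_apply, Pi.zero_apply]

theorem harmonicAt_log_norm_sub (hE : finrank ℝ E = 2) {ξ x : E} (hx : x ≠ ξ) :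
    HarmonicAt (fun y => Real.log ‖y - ξ‖) x := by
  let L : E ≃ₗᵢ[ℝ] ℂ :=
    (stdOrthonormalBasis ℝ E).equiv Complex.orthonormalBasisOneI (finCongr hE)
  have h : HarmonicAt (fun z : ℂ => Real.log ‖z - L ξ‖) (L x) :=
    (analyticAt_id.sub analyticAt_const).harmonicAt_log_norm (sub_ne_zero.2 (L.injective.ne hx))
  convert h.comp_linearIsometryEquiv L using 2 with y
  simp [← map_sub]
theorem abs_sub_le_log_of_harmonicOnNhd_diff_closedBall (hE : finrank ℝ E = 2) {U : Set E}
    (hUo : IsOpen U) (hUb : IsBounded U) {ξ : E} {ρ d M : ℝ} (hρ : 0 < ρ) (hρd : ρ < d)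
    (hd : ∀ x ∈ frontier U, ‖x - ξ‖ ≤ d) {g R₀ R : E → ℝ}
    (hR₀ : HarmonicOnNhd R₀ U) (hR₀c : ContinuousOn R₀ (closure U))
    (hR₀g : ∀ x ∈ frontier U, R₀ x = g x)
    (hR : HarmonicOnNhd R (U \ closedBall ξ ρ))
    (hRc : ContinuousOn R (closure (U \ closedBall ξ ρ)))
    (hRg : ∀ x ∈ frontier (U \ closedBall ξ ρ), R x = g x)
    (hM : ∀ x ∈ closure U, |g x - R₀ x| ≤ M) {x : E} (hx : x ∈ U \ closedBall ξ ρ) :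
    |R x - R₀ x| ≤ M * (Real.log d - Real.log ‖x - ξ‖) / (Real.log d - Real.log ρ) := by
  have : Nontrivial E := nontrivial_of_finrank_eq_succ hE
  set V := U \ closedBall ξ ρ
  have hVo : IsOpen V := hUo.sdiff isClosed_closedBall
  have hclV := closure_diff_closedBall_subset U ξ ρ
  have hne {y : E} (hy : y ∈ closure V) : y - ξ ≠ 0 :=
    norm_pos_iff.1 (hρ.trans_le (hclV hy).2)
  have hden : 0 < Real.log d - Real.log ρ := sub_pos.2 (Real.log_lt_log hρ hρd)
  refine (hR.sub (hR₀.mono sdiff_subset)).abs_le_of_forall_mem_frontier_abs_le hVo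
    (hUb.subset sdiff_subset)
    (h := fun y => M * (Real.log d - Real.log ‖y - ξ‖) / (Real.log d - Real.log ρ)) ?_
    (hRc.sub (hR₀c.mono (closure_mono sdiff_subset))) ?_ ?_ (subset_closure hx)
  · intro y hy
    have hlog := harmonicAt_log_norm_sub hE (sub_ne_zero.1 (hne (subset_closure hy)))
    convert ((harmonicAt_const (Real.log d)).sub hlog).const_smul
      (c := M / (Real.log d - Real.log ρ)) using 1
    ext z
    simp only [Pi.smul_apply, Pi.sub_apply, smul_eq_mul]
    ring
  · refine ContinuousOn.div_const (continuousOn_const.mul (continuousOn_const.sub ?_)) _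
    exact ContinuousOn.log (by fun_prop) fun y hy => norm_ne_zero_iff.2 (hne hy)
  · intro y hy
    have hyV : y ∈ closure V := frontier_subset_closure hy
    have hMy := hM y (hclV hyV).1
    rcases frontier_diff_closedBall_subset U ξ ρ hy with hyU | hyS
    · have hM0 : 0 ≤ M := (abs_nonneg _).trans hMy
      have hlogd : Real.log ‖y - ξ‖ ≤ Real.log d :=
        Real.log_le_log (norm_pos_iff.2 (hne hyV)) (hd y hyU)
      rw [Pi.sub_apply, hRg y hy, hR₀g y hyU, sub_self, abs_zero]
      exact div_nonneg (mul_nonneg hM0 (sub_nonneg.2 hlogd)) hden.le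
    · rw [mem_sphere_iff_norm.1 hyS, mul_div_assoc, div_self hden.ne', mul_one, Pi.sub_apply,
        hRg y hy]
      exact hMy

end Harmonic

theorem HarmOn.harmonicOnNhd {f : Pt → ℝ} {s : Set Pt} (hf : HarmOn f s) (hs : IsOpen s) :
    HarmonicOnNhd f s := fun x hx =>
  ⟨hf.1.contDiffAt (hs.mem_nhds hx), eventually_of_mem (hs.mem_nhds hx) fun y hy => by
    rw [laplacian_eq_iteratedFDeriv_orthonormalBasis f (EuclideanSpace.basisFun (Fin 2) ℝ)]
    simpa using hf.2 y hy⟩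

theorem stmt_8_general (U : Set Pt) (hUo : IsOpen U) (hUb : Bornology.IsBounded U)
    (g : Pt → ℝ) (C : NNReal) (hg : LipschitzOnWith C g (closure U))
    (ξ : Pt) (ρ₀ : ℝ) (hρ₀ : 0 < ρ₀)
    (R : ℝ → Pt → ℝ)
    (hR0 : HarmOn (R 0) U ∧ ContinuousOn (R 0) (closure U) ∧
      ∀ x ∈ frontier U, R 0 x = g x)
    (hR : ∀ ρ ∈ Set.Ioo 0 ρ₀,
      HarmOn (R ρ) (U \ Metric.closedBall ξ ρ) ∧
      ContinuousOn (R ρ) (closure (U \ Metric.closedBall ξ ρ)) ∧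
      ∀ x ∈ frontier (U \ Metric.closedBall ξ ρ), R ρ x = g x) :
    TendstoLocallyUniformlyOn R (R 0) (nhdsWithin 0 (Set.Ioi 0)) (U \ {ξ}) := by
  obtain ⟨harm₀, cont₀, bdry₀⟩ := hR0
  obtain ⟨d, hρ₀d, hd⟩ := hUb.closure.subset_closedBall_lt ρ₀ ξ
  obtain ⟨M, hM⟩ :=
    hUb.isCompact_closure.exists_bound_of_continuousOn (hg.continuousOn.sub cont₀)
  refine tendstoLocallyUniformlyOn_of_abs_sub_le_log (d := d) hρ₀ (le_max_right M 0)
    fun ρ hρ x hx => ?_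
  obtain ⟨harm, cont, bdry⟩ := hR ρ hρ
  exact abs_sub_le_log_of_harmonicOnNhd_diff_closedBall finrank_euclideanSpace_fin hUo hUb hρ.1
    (hρ.2.trans hρ₀d)
    (fun y hy => by simpa [dist_eq_norm] using hd (frontier_subset_closure hy))
    (harm₀.harmonicOnNhd hUo) cont₀ bdry₀ (harm.harmonicOnNhd (hUo.sdiff isClosed_closedBall))
    cont bdry (fun y hy => (hM y hy).trans (le_max_left M 0)) hx

/-- the harmonic functions `R_ρ` on `U_ρ = U \ B_ρ(ξ)` with boundary datum `g`
converge locally uniformly on `U \ {ξ}` to the harmonic function `R₀` on `U`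
with boundary datum `g`, as `ρ → 0`. -/
theorem stmt_8 (U : Set Pt) (hUo : IsOpen U) (hUb : Bornology.IsBounded U)
    (g : Pt → ℝ) (C : NNReal) (hg : LipschitzOnWith C g (closure U))
    (ξ : Pt) (hξ : ξ ∈ U) (ρ₀ : ℝ) (hρ₀ : 0 < ρ₀)
    (hball : Metric.closedBall ξ ρ₀ ⊆ U)
    (R : ℝ → Pt → ℝ)
    (hR0 : HarmOn (R 0) U ∧ ContinuousOn (R 0) (closure U) ∧
      ∀ x ∈ frontier U, R 0 x = g x)
    (hR : ∀ ρ ∈ Set.Ioo 0 ρ₀,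
      HarmOn (R ρ) (U \ Metric.closedBall ξ ρ) ∧
      ContinuousOn (R ρ) (closure (U \ Metric.closedBall ξ ρ)) ∧
      ∀ x ∈ frontier (U \ Metric.closedBall ξ ρ), R ρ x = g x) :
    TendstoLocallyUniformlyOn R (R 0) (nhdsWithin 0 (Set.Ioi 0)) (U \ {ξ}) :=
  stmt_8_general U hUo hUb g C hg ξ ρ₀ hρ₀ R hR0 hR

end
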